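/- Let r ≤ min(d_1, d_2), let M ∈ R^{d_1×d_2} have r-th largest singular value λ_r, and let U (resp. V) be the d_1×r (resp. d_2×r) matrix of left (resp. right) singular vectors for the top r singular values, with orthonormal complements U_⊥, V_⊥. Let M̂ = M + Δ with corresponding quantities Û, V̂, Û_⊥, V̂_⊥, and let λ̂_{r+1} be the (r+1)-th largest singular value of M̂. Set ε_1 = ‖U^T Δ V̂_⊥‖_2 and ε_2 = ‖Û_⊥^T Δ V‖_2. If λ_r > λ̂_{r+1}, then ‖U_⊥^T Û‖_2 ≤ (λ̂_{r+1} ε_1 + λ_r ε_2)/(λ_r^2 − λ̂_{r+1}^2) ≤ max(ε_1, ε_2)/(λ_r − λ̂_{r+1}). -/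

import Mathlib

open Matrix

noncomputable def specNorm {m n : Type*} [Fintype m] [Fintype n] [DecidableEq n]
    (A : Matrix m n ℝ) : ℝ :=
  ‖LinearMap.toContinuousLinearMap (Matrix.toEuclideanLin A)‖

/-- `U` has orthonormal columns, `W` has orthonormal columns, the columns of `U` and `W`
are mutually orthogonal, and together they span the whole space. -/
def OrthoPair {n k : ℕ} (U : Matrix (Fin n) (Fin k) ℝ)
    (W : Matrix (Fin n) (Fin (n - k)) ℝ) : Prop :=
  Uᵀ * U = 1 ∧ Wᵀ * W = 1 ∧ Uᵀ * W = 0 ∧ U * Uᵀ + W * Wᵀ = 1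

/-!
Projecting the two decompositions onto the relevant singular subspaces gives Wedin's identities
`diag σ · Vᵀ V̂⊥ = Uᵀ Û⊥ Ŝ₂ - Uᵀ Δ V̂⊥` and `Û⊥ᵀ U · diag σ = Ŝ₂ V̂⊥ᵀ V - Û⊥ᵀ Δ V`.
As every `σᵢ ≥ λ`, taking norms yields the coupled bounds `λ s ≤ λ̂ t + ε₁` and `λ t ≤ λ̂ s + ε₂`
for `s = ‖Vᵀ V̂⊥‖` and `t = ‖Uᵀ Û⊥‖`, and eliminating `s` bounds `t`. Finally `‖U⊥ᵀ Û‖ = t`: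
with `C = Uᵀ Û` the two squared norms are `‖1 - CᵀC‖` and `‖1 - CCᵀ‖`, and `CᵀC`, `CCᵀ` have the
same spectrum, which determines the norm of a self-adjoint matrix.
-/

open scoped Matrix.Norms.L2Operator

namespace Matrix

variable {n : Type*} [Fintype n] [DecidableEq n]

theorem spectrum_mul_comm {K : Type*} [Field K] (A B : Matrix n n K) :
    spectrum K (A * B) = spectrum K (B * A) := by
  ext x
  by_cases hx : x = 0
  · rw [hx, spectrum.zero_mem_iff, spectrum.zero_mem_iff, isUnit_iff_isUnit_det,
      isUnit_iff_isUnit_det, det_mul, det_mul, mul_comm]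
  · simpa [hx] using Set.ext_iff.mp (spectrum.nonzero_mul_comm A B) x

variable {𝕜 : Type*} [RCLike 𝕜]

theorem spectralRadius_eq_l2_opNNNorm {A : Matrix n n 𝕜} (hA : IsSelfAdjoint A) :
    spectralRadius 𝕜 A = ‖A‖₊ := by
  have h := ContinuousLinearMap.spectralRadius_eq_nnnorm _ (hA.map (toEuclideanCLM (𝕜 := 𝕜)))
  rwa [spectralRadius, AlgEquiv.spectrum_eq, ← spectralRadius] at h

theorem l2_opNorm_one_sub_conjTranspose_mul_self (C : Matrix n n 𝕜) :
    ‖1 - Cᴴ * C‖ = ‖1 - C * Cᴴ‖ := by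
  have hspec : spectrum 𝕜 (1 - Cᴴ * C) = spectrum 𝕜 (1 - C * Cᴴ) := by
    rw [← map_one (algebraMap 𝕜 (Matrix n n 𝕜)), ← spectrum.singleton_sub_eq,
      ← spectrum.singleton_sub_eq, spectrum_mul_comm]
  have hsa (X : Matrix n n 𝕜) : IsSelfAdjoint (1 - Xᴴ * X) :=
    (IsSelfAdjoint.one (R := Matrix n n 𝕜)).sub (.star_mul_self X)
  have h := spectralRadius_eq_l2_opNNNorm (hsa C)
  have h' := spectralRadius_eq_l2_opNNNorm (hsa Cᴴ)
  rw [conjTranspose_conjTranspose] at h'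
  rw [spectralRadius, hspec, ← spectralRadius, h'] at h
  exact congrArg NNReal.toReal (ENNReal.coe_injective h).symm

section Real

variable {m : Type*} [Fintype m]

theorem l2_opNorm_transpose [DecidableEq m] (A : Matrix m n ℝ) : ‖Aᵀ‖ = ‖A‖ := by
  rw [← conjTranspose_eq_transpose_of_trivial, l2_opNorm_conjTranspose]

theorem l2_opNorm_transpose_mul_self (A : Matrix m n ℝ) : ‖Aᵀ * A‖ = ‖A‖ * ‖A‖ := by
  rw [← conjTranspose_eq_transpose_of_trivial, l2_opNorm_conjTranspose_mul_self]

theorem l2_opNorm_mul_transpose_self [DecidableEq m] (A : Matrix m n ℝ) :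
    ‖A * Aᵀ‖ = ‖A‖ * ‖A‖ := by
  simpa [l2_opNorm_transpose] using l2_opNorm_transpose_mul_self Aᵀ

theorem l2_opNorm_one_sub_transpose_mul_self (C : Matrix n n ℝ) :
    ‖1 - Cᵀ * C‖ = ‖1 - C * Cᵀ‖ := by
  simpa only [conjTranspose_eq_transpose_of_trivial] using
    l2_opNorm_one_sub_conjTranspose_mul_self C

theorem mul_l2_opNorm_le_diagonal_mul [DecidableEq m] {d : n → ℝ} {c : ℝ} (h : ∀ i, c ≤ d i)
    (X : Matrix n m ℝ) :
    c * ‖X‖ ≤ ‖diagonal d * X‖ := by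
  rcases le_or_gt c 0 with hc | hc
  · exact (mul_nonpos_of_nonpos_of_nonneg hc (norm_nonneg X)).trans (norm_nonneg _)
  have hd (i : n) : 0 < d i := hc.trans_le (h i)
  have hinv : ‖diagonal d⁻¹‖ ≤ c⁻¹ := by
    rw [l2_opNorm_diagonal]
    refine (pi_norm_le_iff_of_nonneg (by positivity)).mpr fun i => ?_
    rw [Pi.inv_apply, Real.norm_eq_abs, abs_of_pos (inv_pos.mpr (hd i))]
    exact inv_anti₀ hc (h i)
  have hX : X = diagonal d⁻¹ * (diagonal d * X) := by
    simp [← Matrix.mul_assoc, fun i => (hd i).ne']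
  calc c * ‖X‖ = c * ‖diagonal d⁻¹ * (diagonal d * X)‖ := by rw [← hX]
    _ ≤ c * (c⁻¹ * ‖diagonal d * X‖) := by
      gcongr
      exact (l2_opNorm_mul _ _).trans (by gcongr)
    _ = ‖diagonal d * X‖ := by field_simp

theorem mul_l2_opNorm_le_mul_diagonal [DecidableEq m] {d : n → ℝ} {c : ℝ} (h : ∀ i, c ≤ d i)
    (X : Matrix m n ℝ) :
    c * ‖X‖ ≤ ‖X * diagonal d‖ := by
  rw [← l2_opNorm_transpose (X * diagonal d), transpose_mul, diagonal_transpose,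
    ← l2_opNorm_transpose X]
  exact mul_l2_opNorm_le_diagonal_mul h Xᵀ

end Real

end Matrix

namespace OrthoPair

variable {n k : ℕ} {U : Matrix (Fin n) (Fin k) ℝ} {W : Matrix (Fin n) (Fin (n - k)) ℝ}
  {p q o : Type*} [Fintype p] [Fintype q]

theorem perp_transpose_mul (h : OrthoPair U W) : Wᵀ * U = 0 := by
  rw [← transpose_transpose (Wᵀ * U), transpose_mul, transpose_transpose, h.2.2.1, transpose_zero]

theorem mul_transpose_perp (h : OrthoPair U W) : W * Wᵀ = 1 - U * Uᵀ :=
  eq_sub_of_add_eq' h.2.2.2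

theorem transpose_mul_decomp (h : OrthoPair U W) (D : Matrix (Fin k) p ℝ)
    (S : Matrix (Fin (n - k)) q ℝ) (X : Matrix p o ℝ) (Y : Matrix q o ℝ) :
    Uᵀ * (U * D * X + W * S * Y) = D * X := by
  simp only [Matrix.mul_add, ← Matrix.mul_assoc, h.1, h.2.2.1, Matrix.one_mul, Matrix.zero_mul,
    add_zero]

theorem perp_transpose_mul_decomp (h : OrthoPair U W) (D : Matrix (Fin k) p ℝ)
    (S : Matrix (Fin (n - k)) q ℝ) (X : Matrix p o ℝ) (Y : Matrix q o ℝ) :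
    Wᵀ * (U * D * X + W * S * Y) = S * Y := by
  simp only [Matrix.mul_add, ← Matrix.mul_assoc, h.2.1, h.perp_transpose_mul, Matrix.one_mul,
    Matrix.zero_mul, zero_add]

theorem decomp_mul (h : OrthoPair U W) (D : Matrix p (Fin k) ℝ)
    (S : Matrix q (Fin (n - k)) ℝ) (X : Matrix o p ℝ) (Y : Matrix o q ℝ) :
    (X * D * Uᵀ + Y * S * Wᵀ) * U = X * D := by
  simp only [Matrix.add_mul, Matrix.mul_assoc, h.1, h.perp_transpose_mul, Matrix.mul_one,
    Matrix.mul_zero, add_zero]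

theorem decomp_mul_perp (h : OrthoPair U W) (D : Matrix p (Fin k) ℝ)
    (S : Matrix q (Fin (n - k)) ℝ) (X : Matrix o p ℝ) (Y : Matrix o q ℝ) :
    (X * D * Uᵀ + Y * S * Wᵀ) * W = Y * S := by
  simp only [Matrix.add_mul, Matrix.mul_assoc, h.2.1, h.2.2.1, Matrix.mul_one,
    Matrix.mul_zero, zero_add]

theorem l2_opNorm_perp_transpose_mul {V : Matrix (Fin n) (Fin k) ℝ}
    {W' : Matrix (Fin n) (Fin (n - k)) ℝ} (hU : OrthoPair U W) (hV : OrthoPair V W') :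
    ‖Wᵀ * V‖ = ‖Uᵀ * W'‖ := by
  have h₁ : (Wᵀ * V)ᵀ * (Wᵀ * V) = 1 - (Uᵀ * V)ᵀ * (Uᵀ * V) := by
    simp only [transpose_mul, transpose_transpose, Matrix.mul_assoc]
    rw [← Matrix.mul_assoc W, hU.mul_transpose_perp, Matrix.sub_mul, Matrix.one_mul,
      Matrix.mul_sub, hV.1, Matrix.mul_assoc]
  have h₂ : (Uᵀ * W') * (Uᵀ * W')ᵀ = 1 - (Uᵀ * V) * (Uᵀ * V)ᵀ := by
    simp only [transpose_mul, transpose_transpose, Matrix.mul_assoc]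
    rw [← Matrix.mul_assoc W', hV.mul_transpose_perp, Matrix.sub_mul, Matrix.one_mul,
      Matrix.mul_sub, hU.1, Matrix.mul_assoc]
  rw [← mul_self_inj (norm_nonneg _) (norm_nonneg _), ← l2_opNorm_transpose_mul_self,
    ← l2_opNorm_mul_transpose_self, h₁, h₂, l2_opNorm_one_sub_transpose_mul_self]

end OrthoPair

theorem specNorm_eq_l2_opNorm {m n : Type*} [Fintype m] [Fintype n] [DecidableEq n]
    (A : Matrix m n ℝ) : specNorm A = ‖A‖ := rfl

section Wedin

variable {d₁ d₂ r : ℕ} {M Δ : Matrix (Fin d₁) (Fin d₂) ℝ}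
  {U Uh : Matrix (Fin d₁) (Fin r) ℝ} {Uperp Uhperp : Matrix (Fin d₁) (Fin (d₁ - r)) ℝ}
  {V Vh : Matrix (Fin d₂) (Fin r) ℝ} {Vperp Vhperp : Matrix (Fin d₂) (Fin (d₂ - r)) ℝ}
  {Dh : Matrix (Fin r) (Fin r) ℝ} {S Sh : Matrix (Fin (d₁ - r)) (Fin (d₂ - r)) ℝ}

theorem wedin_identity_left {D : Matrix (Fin r) (Fin r) ℝ} (hU : OrthoPair U Uperp)
    (hVh : OrthoPair Vh Vhperp) (hM : M = U * D * Vᵀ + Uperp * S * Vperpᵀ)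
    (hMh : M + Δ = Uh * Dh * Vhᵀ + Uhperp * Sh * Vhperpᵀ) :
    D * (Vᵀ * Vhperp) = Uᵀ * Uhperp * Sh - Uᵀ * Δ * Vhperp := by
  have hUM : Uᵀ * M = D * Vᵀ := hM ▸ hU.transpose_mul_decomp _ _ _ _
  have hMV : (M + Δ) * Vhperp = Uhperp * Sh := hMh ▸ hVh.decomp_mul_perp _ _ _ _
  calc D * (Vᵀ * Vhperp) = Uᵀ * (M + Δ) * Vhperp - Uᵀ * Δ * Vhperp := by
        rw [← Matrix.mul_assoc, ← hUM, Matrix.mul_add, Matrix.add_mul, add_sub_cancel_right]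
    _ = Uᵀ * Uhperp * Sh - Uᵀ * Δ * Vhperp := by
        rw [Matrix.mul_assoc, hMV, ← Matrix.mul_assoc]

theorem wedin_identity_right {D : Matrix (Fin r) (Fin r) ℝ} (hV : OrthoPair V Vperp)
    (hUh : OrthoPair Uh Uhperp) (hM : M = U * D * Vᵀ + Uperp * S * Vperpᵀ)
    (hMh : M + Δ = Uh * Dh * Vhᵀ + Uhperp * Sh * Vhperpᵀ) :
    Uhperpᵀ * U * D = Sh * (Vhperpᵀ * V) - Uhperpᵀ * Δ * V := by
  have hMV : M * V = U * D := hM ▸ hV.decomp_mul _ _ _ _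
  have hUM : Uhperpᵀ * (M + Δ) = Sh * Vhperpᵀ := hMh ▸ hUh.perp_transpose_mul_decomp _ _ _ _
  calc Uhperpᵀ * U * D = Uhperpᵀ * (M + Δ) * V - Uhperpᵀ * Δ * V := by
        rw [Matrix.mul_assoc, ← hMV, ← Matrix.mul_assoc, Matrix.mul_add, Matrix.add_mul,
          add_sub_cancel_right]
    _ = Sh * (Vhperpᵀ * V) - Uhperpᵀ * Δ * V := by rw [hUM, Matrix.mul_assoc]

variable {d : Fin r → ℝ} {c : ℝ}

theorem wedin_bound_left (hU : OrthoPair U Uperp) (hVh : OrthoPair Vh Vhperp)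
    (hM : M = U * diagonal d * Vᵀ + Uperp * S * Vperpᵀ)
    (hMh : M + Δ = Uh * Dh * Vhᵀ + Uhperp * Sh * Vhperpᵀ) (hd : ∀ i, c ≤ d i) :
    c * ‖Vᵀ * Vhperp‖ ≤ ‖Sh‖ * ‖Uᵀ * Uhperp‖ + ‖Uᵀ * Δ * Vhperp‖ :=
  calc c * ‖Vᵀ * Vhperp‖ ≤ ‖diagonal d * (Vᵀ * Vhperp)‖ := mul_l2_opNorm_le_diagonal_mul hd _
    _ = ‖Uᵀ * Uhperp * Sh - Uᵀ * Δ * Vhperp‖ := by rw [wedin_identity_left hU hVh hM hMh]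
    _ ≤ ‖Uᵀ * Uhperp‖ * ‖Sh‖ + ‖Uᵀ * Δ * Vhperp‖ :=
      (norm_sub_le _ _).trans (by gcongr; exact l2_opNorm_mul _ _)
    _ = ‖Sh‖ * ‖Uᵀ * Uhperp‖ + ‖Uᵀ * Δ * Vhperp‖ := by rw [mul_comm]

theorem wedin_bound_right (hV : OrthoPair V Vperp) (hUh : OrthoPair Uh Uhperp)
    (hM : M = U * diagonal d * Vᵀ + Uperp * S * Vperpᵀ)
    (hMh : M + Δ = Uh * Dh * Vhᵀ + Uhperp * Sh * Vhperpᵀ) (hd : ∀ i, c ≤ d i) :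
    c * ‖Uᵀ * Uhperp‖ ≤ ‖Sh‖ * ‖Vᵀ * Vhperp‖ + ‖Uhperpᵀ * Δ * V‖ := by
  rw [← l2_opNorm_transpose (Uᵀ * Uhperp), ← l2_opNorm_transpose (Vᵀ * Vhperp)]
  simp only [transpose_mul, transpose_transpose]
  calc c * ‖Uhperpᵀ * U‖ ≤ ‖Uhperpᵀ * U * diagonal d‖ := mul_l2_opNorm_le_mul_diagonal hd _
    _ = ‖Sh * (Vhperpᵀ * V) - Uhperpᵀ * Δ * V‖ := by rw [wedin_identity_right hV hUh hM hMh]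
    _ ≤ ‖Sh‖ * ‖Vhperpᵀ * V‖ + ‖Uhperpᵀ * Δ * V‖ :=
      (norm_sub_le _ _).trans (by gcongr; exact l2_opNorm_mul _ _)

end Wedin

theorem le_div_sq_sub_sq_of_le_add {lam lamh e₁ e₂ s t : ℝ} (hlamh : 0 ≤ lamh)
    (hgap : lamh < lam) (hs : lam * s ≤ lamh * t + e₁) (ht : lam * t ≤ lamh * s + e₂) :
    t ≤ (lamh * e₁ + lam * e₂) / (lam ^ 2 - lamh ^ 2) := by
  rw [le_div_iff₀ (by nlinarith)]
  nlinarith [mul_le_mul_of_nonneg_left hs hlamh,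
    mul_le_mul_of_nonneg_left ht (hlamh.trans hgap.le)]

theorem div_sq_sub_sq_le_max_div {lam lamh e₁ e₂ : ℝ} (hlamh : 0 ≤ lamh) (hgap : lamh < lam) :
    (lamh * e₁ + lam * e₂) / (lam ^ 2 - lamh ^ 2) ≤ max e₁ e₂ / (lam - lamh) := by
  have hsum : 0 < lam + lamh := by linarith
  rw [show lam ^ 2 - lamh ^ 2 = (lam + lamh) * (lam - lamh) by ring, ← div_div]
  refine div_le_div_of_nonneg_right ?_ (by linarith)
  rw [div_le_iff₀ hsum]
  nlinarith [le_max_left e₁ e₂, le_max_right e₁ e₂]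

theorem stmt4_general (d₁ d₂ r : ℕ)
    (Mmat Δ : Matrix (Fin d₁) (Fin d₂) ℝ)
    (U : Matrix (Fin d₁) (Fin r) ℝ) (Uperp : Matrix (Fin d₁) (Fin (d₁ - r)) ℝ)
    (V : Matrix (Fin d₂) (Fin r) ℝ) (Vperp : Matrix (Fin d₂) (Fin (d₂ - r)) ℝ)
    (hU : OrthoPair U Uperp) (hV : OrthoPair V Vperp)
    (S1 : Fin r → ℝ)
    (S2 : Matrix (Fin (d₁ - r)) (Fin (d₂ - r)) ℝ)
    (hMsplit : Mmat = U * Matrix.diagonal S1 * Vᵀ + Uperp * S2 * Vperpᵀ)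
    (lam : ℝ) (hlam_le : ∀ i, lam ≤ S1 i)
    (Uh : Matrix (Fin d₁) (Fin r) ℝ) (Uhperp : Matrix (Fin d₁) (Fin (d₁ - r)) ℝ)
    (Vh : Matrix (Fin d₂) (Fin r) ℝ) (Vhperp : Matrix (Fin d₂) (Fin (d₂ - r)) ℝ)
    (hUh : OrthoPair Uh Uhperp) (hVh : OrthoPair Vh Vhperp)
    (Sh1 : Fin r → ℝ)
    (Sh2 : Matrix (Fin (d₁ - r)) (Fin (d₂ - r)) ℝ)
    (hMh : Mmat + Δ = Uh * Matrix.diagonal Sh1 * Vhᵀ + Uhperp * Sh2 * Vhperpᵀ)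
    (lamh : ℝ) (hlamh : specNorm Sh2 = lamh)
    (ε₁ ε₂ : ℝ)
    (hε₁ : ε₁ = specNorm (Uᵀ * Δ * Vhperp)) (hε₂ : ε₂ = specNorm (Uhperpᵀ * Δ * V))
    (hgap : lamh < lam) :
    specNorm (Uperpᵀ * Uh) ≤ (lamh * ε₁ + lam * ε₂) / (lam ^ 2 - lamh ^ 2) ∧
      (lamh * ε₁ + lam * ε₂) / (lam ^ 2 - lamh ^ 2) ≤ max ε₁ ε₂ / (lam - lamh) := by
  subst hlamh hε₁ hε₂
  simp only [specNorm_eq_l2_opNorm] at hgap ⊢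
  refine ⟨?_, div_sq_sub_sq_le_max_div (norm_nonneg _) hgap⟩
  rw [hU.l2_opNorm_perp_transpose_mul hUh]
  exact le_div_sq_sub_sq_of_le_add (norm_nonneg _) hgap
    (wedin_bound_left hU hVh hMsplit hMh hlam_le) (wedin_bound_right hV hUh hMsplit hMh hlam_le)

theorem stmt4 (d₁ d₂ r : ℕ) (hr0 : 0 < r) (hr₁ : r ≤ d₁) (hr₂ : r ≤ d₂)
    (Mmat Δ : Matrix (Fin d₁) (Fin d₂) ℝ)
    (U : Matrix (Fin d₁) (Fin r) ℝ) (Uperp : Matrix (Fin d₁) (Fin (d₁ - r)) ℝ)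
    (V : Matrix (Fin d₂) (Fin r) ℝ) (Vperp : Matrix (Fin d₂) (Fin (d₂ - r)) ℝ)
    (hU : OrthoPair U Uperp) (hV : OrthoPair V Vperp)
    (S1 : Fin r → ℝ) (hS1 : ∀ i, 0 ≤ S1 i)
    (S2 : Matrix (Fin (d₁ - r)) (Fin (d₂ - r)) ℝ)
    (hMsplit : Mmat = U * Matrix.diagonal S1 * Vᵀ + Uperp * S2 * Vperpᵀ)
    (lam : ℝ) (hlam_le : ∀ i, lam ≤ S1 i) (hlam_mem : ∃ i, S1 i = lam)
    (hS2 : specNorm S2 ≤ lam)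
    (Uh : Matrix (Fin d₁) (Fin r) ℝ) (Uhperp : Matrix (Fin d₁) (Fin (d₁ - r)) ℝ)
    (Vh : Matrix (Fin d₂) (Fin r) ℝ) (Vhperp : Matrix (Fin d₂) (Fin (d₂ - r)) ℝ)
    (hUh : OrthoPair Uh Uhperp) (hVh : OrthoPair Vh Vhperp)
    (Sh1 : Fin r → ℝ) (hSh1 : ∀ i, 0 ≤ Sh1 i)
    (Sh2 : Matrix (Fin (d₁ - r)) (Fin (d₂ - r)) ℝ)
    (hMh : Mmat + Δ = Uh * Matrix.diagonal Sh1 * Vhᵀ + Uhperp * Sh2 * Vhperpᵀ)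
    (lamh : ℝ) (hlamh_le : ∀ i, lamh ≤ Sh1 i) (hlamh : specNorm Sh2 = lamh)
    (ε₁ ε₂ : ℝ)
    (hε₁ : ε₁ = specNorm (Uᵀ * Δ * Vhperp)) (hε₂ : ε₂ = specNorm (Uhperpᵀ * Δ * V))
    (hgap : lamh < lam) :
    specNorm (Uperpᵀ * Uh) ≤ (lamh * ε₁ + lam * ε₂) / (lam ^ 2 - lamh ^ 2) ∧
      (lamh * ε₁ + lam * ε₂) / (lam ^ 2 - lamh ^ 2) ≤ max ε₁ ε₂ / (lam - lamh) :=
  stmt4_general d₁ d₂ r Mmat Δ U Uperp V Vperp hU hV S1 S2 hMsplit lam hlam_le Uh Uhperp Vh Vhperp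
    hUh hVh Sh1 Sh2 hMh lamh hlamh ε₁ ε₂ hε₁ hε₂ hgap
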